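/- Let (c_r)_{r≥2} be nonnegative real numbers with c := ∑_{r≥2} c_r < ∞. For each n ≥ 1, let (X_{n,r})_{r≥2} be a family of independent Poisson random variables, where X_{n,r} has mean m_{n,r} = n(n−1)⋯(n−r+1)·c_r / (r·n^{r−1}) (interpreting m_{n,r} = 0 when r > n). Then (1/n) ∑_{r≥2} r·X_{n,r} converges in probability to c as n → ∞. -/

import Mathlib

/-!
Write `(n)_r = n(n−1)⋯(n−r+1)`, so that `r·m_{n,r}/n = (n)_r c_r / n^r`, and cut
`(1/n) ∑_r r X_{n,r}` at a level `M`. The head is a finite sum of independent Poisson variables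
with mean `∑_{r<M} (n)_r c_r / n^r → ∑_{r<M} c_r` (as `(n)_r ~ n^r`) and variance
`n⁻² ∑_{r<M} r² m_{n,r} = O(1/n)`, so it concentrates by Chebyshev. As `(n)_r ≤ n^r`, the tail
has expectation at most `∑_{r≥M} c_r` for every `n`, so by Markov it is small with high
probability once `M` is large.
-/

open MeasureTheory ENNReal Filter ProbabilityTheory
open scoped NNReal Nat Topology

/-- The total number of vertices in atoms, `∑_{r≥2} r·X_{n,r}`, valued in `[0,∞]`;
here `X m` plays the role of `X_{n,m+2}`. -/
noncomputable def atomVertexSum {Ω : Type*} (X : ℕ → Ω → ℕ) (ω : Ω) : ℝ≥0∞ :=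
  ∑' m : ℕ, ((m : ℝ≥0∞) + 2) * (X m ω : ℝ≥0∞)

lemma atomVertexSum_div_eq {Ω : Type*} (X : ℕ → Ω → ℕ) (ω : Ω) {n : ℕ} (hn : n ≠ 0) (M : ℕ) :
    atomVertexSum X ω / n = ENNReal.ofReal (∑ m ∈ Finset.range M, ((m : ℝ) + 2) / n * X m ω) +
      ∑' m, ENNReal.ofReal ((((m + M : ℕ) : ℝ) + 2) / n) * X (m + M) ω := by
  have hterm (m : ℕ) :
      ((m : ℝ≥0∞) + 2) * X m ω / n = ENNReal.ofReal (((m : ℝ) + 2) / n) * X m ω := by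
    rw [ENNReal.ofReal_div_of_pos (by positivity), ENNReal.ofReal_add (by positivity) zero_le_two,
      ENNReal.ofReal_natCast, ENNReal.ofReal_natCast, ENNReal.ofReal_ofNat, div_eq_mul_inv,
      div_eq_mul_inv, mul_right_comm]
  rw [atomVertexSum, div_eq_mul_inv, ← ENNReal.tsum_mul_right]
  simp_rw [← div_eq_mul_inv, hterm]
  rw [← Summable.sum_add_tsum_nat_add' (k := M) ENNReal.summable,
    ENNReal.ofReal_sum_of_nonneg fun m _ => by positivity]
  congr 1
  exact Finset.sum_congr rfl fun m _ => by
    rw [ENNReal.ofReal_mul (by positivity), ENNReal.ofReal_natCast]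

namespace ProbabilityTheory

lemma lintegral_poissonMeasure (r : ℝ≥0) (f : ℕ → ℝ≥0∞) :
    ∫⁻ k, f k ∂poissonMeasure r = ∑' k, ENNReal.ofReal (Real.exp (-r) * r ^ k / k !) * f k := by
  rw [lintegral_countable']
  exact tsum_congr fun k => by rw [poissonMeasure_singleton, mul_comm]

lemma lintegral_natCast_mul_poissonMeasure (r : ℝ≥0) (f : ℕ → ℝ≥0∞) :
    ∫⁻ k, k * f k ∂poissonMeasure r = r * ∫⁻ k, f (k + 1) ∂poissonMeasure r := by
  simp only [lintegral_poissonMeasure]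
  rw [tsum_eq_zero_add' ENNReal.summable, ← ENNReal.tsum_mul_left]
  simp only [Nat.cast_zero, zero_mul, mul_zero, zero_add]
  refine tsum_congr fun k => ?_
  have hweight : Real.exp (-r) * r ^ (k + 1) / (k + 1)! * (k + 1 : ℕ) =
      r * (Real.exp (-r) * r ^ k / k !) := by
    rw [Nat.factorial_succ]
    push_cast
    field_simp
    ring
  rw [← mul_assoc, ← mul_assoc, ← ENNReal.ofReal_natCast, ← ENNReal.ofReal_mul (by positivity),
    hweight, ENNReal.ofReal_mul r.coe_nonneg, ENNReal.ofReal_coe_nnreal]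

lemma lintegral_natCast_poissonMeasure (r : ℝ≥0) :
    ∫⁻ k, (k : ℝ≥0∞) ∂poissonMeasure r = r := by
  simpa using lintegral_natCast_mul_poissonMeasure r 1

lemma lintegral_natCast_sq_poissonMeasure (r : ℝ≥0) :
    ∫⁻ k, (k : ℝ≥0∞) ^ 2 ∂poissonMeasure r = r * (r + 1) := by
  simp_rw [sq, lintegral_natCast_mul_poissonMeasure r (fun k => (k : ℝ≥0∞)), Nat.cast_succ]
  rw [lintegral_add_right _ measurable_const, lintegral_natCast_poissonMeasure]
  simp

lemma integrable_natCast_sq_poissonMeasure (r : ℝ≥0) :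
    Integrable (fun k : ℕ => (k : ℝ) ^ 2) (poissonMeasure r) := by
  refine ⟨.of_discrete, ?_⟩
  rw [hasFiniteIntegral_iff_ofReal (ae_of_all _ fun k => by positivity)]
  simp only [ENNReal.ofReal_pow (Nat.cast_nonneg _), ENNReal.ofReal_natCast,
    lintegral_natCast_sq_poissonMeasure]
  exact ENNReal.mul_lt_top ENNReal.coe_lt_top (by simp)

lemma memLp_natCast_poissonMeasure (r : ℝ≥0) :
    MemLp (fun k : ℕ => (k : ℝ)) 2 (poissonMeasure r) :=
  (memLp_two_iff_integrable_sq .of_discrete).2 (integrable_natCast_sq_poissonMeasure r)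

lemma integral_natCast_poissonMeasure (r : ℝ≥0) :
    ∫ k, (k : ℝ) ∂poissonMeasure r = r := by
  rw [integral_eq_lintegral_of_nonneg_ae (ae_of_all _ fun k => by positivity) .of_discrete]
  simp [lintegral_natCast_poissonMeasure]

lemma integral_natCast_sq_poissonMeasure (r : ℝ≥0) :
    ∫ k, (k : ℝ) ^ 2 ∂poissonMeasure r = r * (r + 1) := by
  rw [integral_eq_lintegral_of_nonneg_ae (ae_of_all _ fun k => by positivity) .of_discrete]
  simp only [ENNReal.ofReal_pow (Nat.cast_nonneg _), ENNReal.ofReal_natCast,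
    lintegral_natCast_sq_poissonMeasure]
  simp [ENNReal.toReal_add]

lemma variance_natCast_poissonMeasure (r : ℝ≥0) :
    Var[fun k : ℕ => (k : ℝ); poissonMeasure r] = r := by
  rw [variance_eq_sub (memLp_natCast_poissonMeasure r)]
  simp only [Pi.pow_def, integral_natCast_sq_poissonMeasure, integral_natCast_poissonMeasure]
  ring

variable {Ω : Type*} [MeasurableSpace Ω] {P : Measure Ω}

section HasLawPoisson

variable {X : Ω → ℕ} {r : ℝ≥0}

lemma hasLaw_poissonMeasure (hX : Measurable X)
    (h : ∀ k, P {ω | X ω = k} = ENNReal.ofReal (Real.exp (-r) * r ^ k / k !)) :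
    HasLaw X (poissonMeasure r) P where
  map_eq := Measure.ext_iff_singleton.2 fun k => by
    rw [Measure.map_apply hX (measurableSet_singleton k), poissonMeasure_singleton]
    exact h k

lemma HasLaw.lintegral_natCast_poissonMeasure (hX : HasLaw X (poissonMeasure r) P) :
    ∫⁻ ω, (X ω : ℝ≥0∞) ∂P = r := by
  rw [hX.lintegral_comp .of_discrete, ProbabilityTheory.lintegral_natCast_poissonMeasure]

lemma HasLaw.integral_natCast_poissonMeasure (hX : HasLaw X (poissonMeasure r) P) :
    ∫ ω, (X ω : ℝ) ∂P = r := by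
  rw [← ProbabilityTheory.integral_natCast_poissonMeasure, ← hX.integral_comp .of_discrete]
  rfl

lemma HasLaw.memLp_natCast_poissonMeasure (hX : HasLaw X (poissonMeasure r) P) :
    MemLp (fun ω => (X ω : ℝ)) 2 P :=
  (hX.map_eq ▸ ProbabilityTheory.memLp_natCast_poissonMeasure r).comp_of_map hX.aemeasurable

lemma HasLaw.variance_natCast_poissonMeasure (hX : HasLaw X (poissonMeasure r) P) :
    Var[fun ω => (X ω : ℝ); P] = r := by
  rw [← ProbabilityTheory.variance_natCast_poissonMeasure, ← hX.map_eq,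
    variance_map .of_discrete hX.aemeasurable]
  rfl

end HasLawPoisson

section PoissonFamily

variable {ι : Type*} {X : ι → Ω → ℕ} {r : ι → ℝ≥0}

lemma lintegral_tsum_mul_poisson [Countable ι] (hX : ∀ i, HasLaw (X i) (poissonMeasure (r i)) P)
    (w : ι → ℝ≥0∞) : ∫⁻ ω, ∑' i, w i * X i ω ∂P = ∑' i, w i * r i := by
  have hXi i : AEMeasurable (fun ω => (X i ω : ℝ≥0∞)) P :=
    (measurable_of_countable _).comp_aemeasurable (hX i).aemeasurable
  rw [lintegral_tsum fun i => (hXi i).const_mul _]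
  exact tsum_congr fun i => by
    rw [lintegral_const_mul'' _ (hXi i), (hX i).lintegral_natCast_poissonMeasure]

variable (hX : ∀ i, HasLaw (X i) (poissonMeasure (r i)) P) (s : Finset ι) (w : ι → ℝ)
include hX

lemma memLp_sum_mul_poisson : MemLp (fun ω => ∑ i ∈ s, w i * X i ω) 2 P :=
  memLp_finsetSum s fun i _ => (hX i).memLp_natCast_poissonMeasure.const_mul _

lemma integral_sum_mul_poisson [IsFiniteMeasure P] :
    ∫ ω, ∑ i ∈ s, w i * X i ω ∂P = ∑ i ∈ s, w i * r i := by
  rw [integral_finsetSum s fun i _ =>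
    ((hX i).memLp_natCast_poissonMeasure.integrable one_le_two).const_mul _]
  exact Finset.sum_congr rfl fun i _ => by
    rw [integral_const_mul, (hX i).integral_natCast_poissonMeasure]

lemma variance_sum_mul_poisson (hindep : iIndepFun X P) :
    Var[fun ω => ∑ i ∈ s, w i * X i ω; P] = ∑ i ∈ s, w i ^ 2 * r i := by
  rw [← Finset.sum_fn, IndepFun.variance_sum
    (fun i _ => (hX i).memLp_natCast_poissonMeasure.const_mul _)
    (fun i _ j _ hij => (hindep.indepFun hij).comp
      (measurable_of_countable fun k : ℕ => w i * k) (measurable_of_countable fun k : ℕ => w j * k))]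
  exact Finset.sum_congr rfl fun i _ => by
    rw [variance_const_mul, (hX i).variance_natCast_poissonMeasure]

end PoissonFamily

lemma tendstoInMeasure_const_of_tendsto_variance {ι : Type*} {l : Filter ι} [IsFiniteMeasure P]
    {Z : ι → Ω → ℝ} {b : ℝ} (hZ : ∀ i, MemLp (Z i) 2 P)
    (hmean : Tendsto (fun i => P[Z i]) l (𝓝 b)) (hvar : Tendsto (fun i => Var[Z i; P]) l (𝓝 0)) :
    TendstoInMeasure P Z l (fun _ => b) := by
  refine tendstoInMeasure_iff_dist.2 fun ε hε => ?_
  have hcheb : ∀ᶠ i in l,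
      P {ω | ε ≤ dist (Z i ω) b} ≤ ENNReal.ofReal (Var[Z i; P] / (ε / 2) ^ 2) := by
    filter_upwards [Metric.tendsto_nhds.1 hmean (ε / 2) (half_pos hε)] with i hi
    refine (measure_mono fun ω hω => ?_).trans (meas_ge_le_variance_div_sq (hZ i) (half_pos hε))
    simp only [Set.mem_ofPred_eq, Real.dist_eq] at hω hi ⊢
    linarith [abs_sub_le (Z i ω) (P[Z i]) b]
  have hbound : Tendsto (fun i => ENNReal.ofReal (Var[Z i; P] / (ε / 2) ^ 2)) l (𝓝 0) := by
    simpa using ENNReal.tendsto_ofReal (hvar.div_const _)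
  exact tendsto_of_tendsto_of_tendsto_of_le_of_le' tendsto_const_nhds hbound
    (.of_forall fun _ => bot_le) hcheb

end ProbabilityTheory

lemma ENNReal.ofReal_sub_ofReal_le (u v : ℝ) :
    ENNReal.ofReal u - ENNReal.ofReal v ≤ ENNReal.ofReal (u - v) := by
  rw [tsub_le_iff_right]
  calc ENNReal.ofReal u = ENNReal.ofReal (u - v + v) := by ring_nf
    _ ≤ _ := ENNReal.ofReal_add_le

lemma ENNReal.ofReal_add_sub_sup_sub_le (u v : ℝ) (t : ℝ≥0∞) :
    (ENNReal.ofReal u + t - ENNReal.ofReal v) ⊔ (ENNReal.ofReal v - (ENNReal.ofReal u + t))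
      ≤ ENNReal.ofReal |u - v| + t := by
  refine sup_le (add_tsub_le_tsub_add.trans (add_le_add_left ?_ t)) ?_
  · exact (ofReal_sub_ofReal_le u v).trans (ofReal_le_ofReal (le_abs_self _))
  · calc ENNReal.ofReal v - (ENNReal.ofReal u + t) ≤ ENNReal.ofReal (v - u) :=
          (tsub_le_tsub_left le_self_add _).trans (ofReal_sub_ofReal_le v u)
      _ ≤ ENNReal.ofReal |u - v| + t :=
          (ofReal_le_ofReal (abs_sub_comm u v ▸ le_abs_self _)).trans le_self_add

lemma le_dist_or_ofReal_le_of_ofReal_le {z b a ε : ℝ} {t : ℝ≥0∞} (hba : |b - a| ≤ ε / 4)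
    (h : ENNReal.ofReal ε ≤
      (ENNReal.ofReal z + t - ENNReal.ofReal a) ⊔ (ENNReal.ofReal a - (ENNReal.ofReal z + t))) :
    ε / 2 ≤ dist z b ∨ ENNReal.ofReal (ε / 4) ≤ t := by
  by_contra! hlt
  obtain ⟨hz, ht⟩ := hlt
  have hza : |z - a| < 3 * ε / 4 := by
    rw [Real.dist_eq] at hz
    linarith [abs_sub_le z b a]
  have hsmall : ENNReal.ofReal |z - a| + t < ENNReal.ofReal ε :=
    calc _ < ENNReal.ofReal (3 * ε / 4) + ENNReal.ofReal (ε / 4) :=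
          ENNReal.add_lt_add
            (ENNReal.ofReal_lt_ofReal_iff'.2 ⟨hza, by linarith [abs_nonneg (z - a)]⟩) ht
      _ = ENNReal.ofReal ε := by
          rw [← ENNReal.ofReal_add (by linarith [abs_nonneg (z - a)])
            (by linarith [abs_nonneg (z - a)])]
          ring_nf
  exact (h.trans (ENNReal.ofReal_add_sub_sup_sub_le z a t)).not_gt hsmall

section

variable {Ω : Type*} [MeasurableSpace Ω] {P : Measure Ω}

theorem tendsto_measure_ofReal_le_sub_sup_sub_of_approx {ι : Type*} {l : Filter ι}
    {S : ι → Ω → ℝ≥0∞} {a ε : ℝ} (hε : 0 < ε)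
    (happrox : ∀ η > 0, ∃ (b : ℝ) (Z : ι → Ω → ℝ) (T : ι → Ω → ℝ≥0∞), |b - a| ≤ η ∧
      TendstoInMeasure P Z l (fun _ => b) ∧ (∀ i, AEMeasurable (T i) P) ∧
      ∀ᶠ i in l, ∫⁻ ω, T i ω ∂P ≤ ENNReal.ofReal η ∧
        S i = fun ω => ENNReal.ofReal (Z i ω) + T i ω) :
    Tendsto (fun i => P {ω | ENNReal.ofReal ε ≤
      (S i ω - ENNReal.ofReal a) ⊔ (ENNReal.ofReal a - S i ω)}) l (𝓝 0) := by
  refine ENNReal.tendsto_nhds_zero.2 fun δ hδ => ?_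
  obtain ⟨ρ, -, hρ, hρδ⟩ := ENNReal.lt_iff_exists_real_btwn.1 hδ
  have hρ0 : 0 < ρ := ENNReal.ofReal_pos.1 hρ
  -- `η ≤ ε / 4` controls `|b - a|`, and `η ≤ ρ ε / 8` makes the Markov bound on `T` at most `ρ / 2`.
  set η := min (ε / 4) (ρ * ε / 8)
  obtain ⟨b, Z, T, hba, hZ, hT, hev⟩ := happrox η (by positivity)
  have hZlim := tendstoInMeasure_iff_dist.1 hZ (ε / 2) (half_pos hε)
  filter_upwards [hev, hZlim.eventually_lt_const (ENNReal.ofReal_pos.2 (half_pos hρ0))]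
    with i ⟨hTi, hS⟩ hZi
  have hmarkov : P {ω | ENNReal.ofReal (ε / 4) ≤ T i ω} ≤ ENNReal.ofReal (ρ / 2) :=
    calc _ ≤ (∫⁻ ω, T i ω ∂P) / ENNReal.ofReal (ε / 4) :=
          meas_ge_le_lintegral_div (hT i) (by positivity) ENNReal.ofReal_ne_top
      _ ≤ ENNReal.ofReal η / ENNReal.ofReal (ε / 4) := by gcongr
      _ = ENNReal.ofReal (η / (ε / 4)) := (ENNReal.ofReal_div_of_pos (by positivity)).symm
      _ ≤ ENNReal.ofReal (ρ / 2) := by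
          refine ENNReal.ofReal_le_ofReal ?_
          rw [div_le_iff₀ (by positivity)]
          linarith [min_le_right (ε / 4) (ρ * ε / 8)]
  calc _ ≤ P ({ω | ε / 2 ≤ dist (Z i ω) b} ∪ {ω | ENNReal.ofReal (ε / 4) ≤ T i ω}) :=
        measure_mono fun ω hω => by
          rw [Set.mem_ofPred_eq, hS] at hω
          exact le_dist_or_ofReal_le_of_ofReal_le (hba.trans (min_le_left _ _)) hω
    _ ≤ ENNReal.ofReal (ρ / 2) + ENNReal.ofReal (ρ / 2) :=
        (measure_union_le _ _).trans (add_le_add hZi.le hmarkov)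
    _ = ENNReal.ofReal ρ := by
        rw [← ENNReal.ofReal_add (by positivity) (by positivity)]
        ring_nf
    _ ≤ δ := hρδ.le

section PoissonAtoms

variable {X : ℕ → ℕ → Ω → ℕ} {r : ℕ → ℕ → ℝ≥0} {c : ℕ → ℝ}
  (hX : ∀ n m, HasLaw (X n m) (poissonMeasure (r n m)) P)
include hX

lemma tendstoInMeasure_atomVertexSum_head [IsProbabilityMeasure P]
    (hindep : ∀ n, iIndepFun (X n) P)
    (hlim : ∀ m : ℕ, Tendsto (fun n : ℕ => ((m : ℝ) + 2) * r n m / n) atTop (𝓝 (c m))) (M : ℕ) :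
    TendstoInMeasure P (fun n ω => ∑ m ∈ Finset.range M, ((m : ℝ) + 2) / n * X n m ω) atTop
      (fun _ => ∑ m ∈ Finset.range M, c m) := by
  refine tendstoInMeasure_const_of_tendsto_variance (fun n => memLp_sum_mul_poisson (hX n) _ _)
    ?_ ?_
  · simp_rw [integral_sum_mul_poisson (hX _), div_mul_eq_mul_div]
    exact tendsto_finsetSum _ fun m _ => hlim m
  · have hvar : Tendsto (fun n : ℕ => (n : ℝ)⁻¹ *
        ∑ m ∈ Finset.range M, ((m : ℝ) + 2) * (((m : ℝ) + 2) * r n m / n)) atTop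
        (𝓝 (0 * ∑ m ∈ Finset.range M, ((m : ℝ) + 2) * c m)) :=
      (tendsto_inv_atTop_zero.comp tendsto_natCast_atTop_atTop).mul
        (tendsto_finsetSum _ fun m _ => (hlim m).const_mul _)
    rw [zero_mul] at hvar
    refine hvar.congr fun n => ?_
    rw [variance_sum_mul_poisson (hX n) _ _ (hindep n), Finset.mul_sum]
    exact Finset.sum_congr rfl fun m _ => by ring

lemma lintegral_atomVertexSum_tail_le (hc0 : ∀ m, 0 ≤ c m) (hcsum : Summable c)
    (hle : ∀ n m : ℕ, ((m : ℝ) + 2) * r n m ≤ n * c m) {n : ℕ} (hn : n ≠ 0) (M : ℕ) :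
    ∫⁻ ω, ∑' m, ENNReal.ofReal ((((m + M : ℕ) : ℝ) + 2) / n) * X n (m + M) ω ∂P ≤
      ENNReal.ofReal (∑' m, c (m + M)) := by
  rw [lintegral_tsum_mul_poisson fun m => hX n (m + M),
    ENNReal.ofReal_tsum_of_nonneg (fun m => hc0 _) ((summable_nat_add_iff M).2 hcsum)]
  refine ENNReal.tsum_le_tsum fun m => ?_
  rw [← ENNReal.ofReal_coe_nnreal, ← ENNReal.ofReal_mul (by positivity)]
  refine ENNReal.ofReal_le_ofReal ?_
  rw [div_mul_eq_mul_div, div_le_iff₀ (by positivity), mul_comm (c _)]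
  exact hle n (m + M)

theorem tendsto_measure_atomVertexSum_div [IsProbabilityMeasure P]
    (hindep : ∀ n, iIndepFun (X n) P) (hc0 : ∀ m, 0 ≤ c m) (hcsum : Summable c)
    (hle : ∀ n m : ℕ, ((m : ℝ) + 2) * r n m ≤ n * c m)
    (hlim : ∀ m : ℕ, Tendsto (fun n : ℕ => ((m : ℝ) + 2) * r n m / n) atTop (𝓝 (c m)))
    {ε : ℝ} (hε : 0 < ε) :
    Tendsto (fun n : ℕ => P {ω | ENNReal.ofReal ε ≤
      (atomVertexSum (X n) ω / n - ENNReal.ofReal (∑' m, c m)) ⊔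
      (ENNReal.ofReal (∑' m, c m) - atomVertexSum (X n) ω / n)}) atTop (𝓝 0) := by
  refine tendsto_measure_ofReal_le_sub_sup_sub_of_approx
    (S := fun n ω => atomVertexSum (X n) ω / n) hε fun η hη => ?_
  obtain ⟨M, hM⟩ := ((tendsto_sum_nat_add c).eventually_le_const hη).exists
  refine ⟨∑ m ∈ Finset.range M, c m,
    fun n ω => ∑ m ∈ Finset.range M, ((m : ℝ) + 2) / n * X n m ω,
    fun n ω => ∑' m, ENNReal.ofReal ((((m + M : ℕ) : ℝ) + 2) / n) * X n (m + M) ω, ?_,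
    tendstoInMeasure_atomVertexSum_head hX hindep hlim M, fun n => AEMeasurable.tsum fun m => ?_,
    ?_⟩
  · rw [← hcsum.sum_add_tsum_nat_add M, sub_add_cancel_left, abs_neg,
      abs_of_nonneg (tsum_nonneg fun m => hc0 _)]
    exact hM
  · exact ((measurable_of_countable _).comp_aemeasurable (hX n (m + M)).aemeasurable).const_mul _
  · filter_upwards [eventually_ne_atTop 0] with n hn
    exact ⟨(lintegral_atomVertexSum_tail_le hX hc0 hcsum hle hn M).trans
      (ENNReal.ofReal_le_ofReal hM), funext fun ω => atomVertexSum_div_eq (X n) ω hn M⟩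

end PoissonAtoms

end

noncomputable def atomCountMean (c : ℕ → ℝ) (n m : ℕ) : ℝ :=
  ((n.descFactorial (m + 2) : ℝ) * c m) / (((m : ℝ) + 2) * (n : ℝ) ^ (m + 1))

section AtomCountMean

variable {c : ℕ → ℝ} {n m : ℕ}

lemma atomCountMean_nonneg (hc : 0 ≤ c m) : 0 ≤ atomCountMean c n m := by
  unfold atomCountMean
  positivity

lemma mul_atomCountMean_le (hc : 0 ≤ c m) : ((m : ℝ) + 2) * atomCountMean c n m ≤ n * c m := by
  rcases n.eq_zero_or_pos with rfl | hn
  · simp [atomCountMean]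
  rw [atomCountMean, mul_div_assoc', mul_div_mul_left _ _ (by positivity),
    div_le_iff₀ (by positivity)]
  calc (n.descFactorial (m + 2) : ℝ) * c m ≤ (n : ℝ) ^ (m + 2) * c m := by
        gcongr
        exact_mod_cast n.descFactorial_le_pow (m + 2)
    _ = n * c m * n ^ (m + 1) := by ring

lemma tendsto_mul_atomCountMean_div (c : ℕ → ℝ) (m : ℕ) :
    Tendsto (fun n : ℕ => ((m : ℝ) + 2) * atomCountMean c n m / n) atTop (𝓝 (c m)) := by
  have hdesc := (Asymptotics.isEquivalent_iff_tendsto_one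
    ((eventually_ne_atTop 0).mono fun n hn => by positivity)).1 (isEquivalent_descFactorial (m + 2))
  rw [← one_mul (c m)]
  refine (hdesc.mul_const (c m)).congr' ((eventually_ne_atTop 0).mono fun n hn => ?_)
  simp only [Pi.div_apply, atomCountMean]
  field_simp
  ring

end AtomCountMean

/-- the probabilistic content of Lemma 5.6, `badv`, of the paper.
Let `(c_r)_{r≥2}` be nonnegative with `c = ∑_{r≥2} c_r < ∞`, and for each `n` let
`(X_{n,r})_{r≥2}` be independent Poisson variables with means
`m_{n,r} = n(n−1)⋯(n−r+1)·c_r/(r·n^{r−1})`. Then `(1/n) ∑_{r≥2} r·X_{n,r} → c`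
in probability. Here `c m` plays the role of `c_{m+2}` and `X n m` of `X_{n,m+2}`. -/
theorem stmt14 {Ω : Type*} [MeasurableSpace Ω] (P : Measure Ω) [IsProbabilityMeasure P]
    (c : ℕ → ℝ) (hc0 : ∀ m, 0 ≤ c m) (hcsum : Summable c)
    (X : ℕ → ℕ → Ω → ℕ)
    (hXmeas : ∀ n m, Measurable (X n m))
    (hindep : ∀ n, iIndepFun (X n) P)
    (hpois : ∀ n m k, P {ω | X n m ω = k} =
      ENNReal.ofReal (Real.exp (-(((n.descFactorial (m + 2) : ℝ) * c m) /
          (((m : ℝ) + 2) * (n : ℝ) ^ (m + 1)))) *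
        (((n.descFactorial (m + 2) : ℝ) * c m) /
          (((m : ℝ) + 2) * (n : ℝ) ^ (m + 1))) ^ k / (Nat.factorial k))) :
    ∀ ε : ℝ, 0 < ε →
      Tendsto (fun n : ℕ =>
        P {ω | ENNReal.ofReal ε ≤
          (atomVertexSum (X n) ω / (n : ℝ≥0∞) - ENNReal.ofReal (∑' m, c m)) ⊔
          (ENNReal.ofReal (∑' m, c m) - atomVertexSum (X n) ω / (n : ℝ≥0∞))})
        atTop (nhds 0) := by
  intro ε hε
  let r n m : ℝ≥0 := ⟨atomCountMean c n m, atomCountMean_nonneg (hc0 m)⟩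
  have hX n m : HasLaw (X n m) (poissonMeasure (r n m)) P :=
    hasLaw_poissonMeasure (hXmeas n m) (hpois n m)
  exact tendsto_measure_atomVertexSum_div hX hindep hc0 hcsum
    (fun n m => mul_atomCountMean_le (hc0 m)) (tendsto_mul_atomCountMean_div c) hε
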